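/- Let b > 0, σ > 0, κ > 0, t > 0, and let ν be a measure on (0,∞) with ∫_0^∞ (z∧1) ν(dz) < ∞. For s ∈ (0,t] and z > 1 set α(z,s) := 2bz/(σ²(e^{bs} − 1)) and β(z,s) := 2be^{bs}/(σ²(e^{bs} − 1)). Then ∫_0^t ∫_{(1,∞)} ( ∫_{[0,∞)} y^κ m_{α(z,s),β(z,s)}(dy) ) ν(dz) ds < ∞ if and only if ∫_{(1,∞)} z^κ ν(dz) < ∞. -/

import Mathlib

open MeasureTheory Filter Set
open scoped ENNReal

/-- The modified Bessel function of the first kind of order one,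
`I₁(r) = (r/2) Σ_{k=0}^∞ (r²/4)^k / (k!(k+1)!)`. -/
noncomputable def besselI1 (r : ℝ) : ℝ :=
  r / 2 * ∑' k : ℕ, (r ^ 2 / 4) ^ k / ((Nat.factorial k : ℝ) * (Nat.factorial (k + 1) : ℝ))

/-- The Bessel distribution `m_{α,β}` on `[0,∞)`:
`m_{α,β}(dx) = e^{−α} δ₀(dx) + β e^{−α−βx} √(α/(βx)) I₁(2√(αβx)) dx`. -/
noncomputable def besselMeasure (α β : ℝ) : Measure ℝ :=
  ENNReal.ofReal (Real.exp (-α)) • Measure.dirac (0 : ℝ) +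
    MeasureTheory.volume.withDensity fun x =>
      ENNReal.ofReal (Set.indicator (Set.Ioi (0 : ℝ))
        (fun x => β * Real.exp (-α - β * x) * Real.sqrt (α / (β * x)) *
          besselI1 (2 * Real.sqrt (α * β * x))) x)

/-!
Expanding `I₁` into its series shows that `m_{α,β}` is the law of a sum of `N ~ Poisson(α)`
independent exponential variables of rate `β`; its mean is `μ = α / β` and its moment generating
function is `θ ↦ exp (α θ / (β - θ))` for `θ < β`. If `α ≥ α₀ > 0`, a Chernoff bound at
`θ = α₀ / (2μ)` gives `∫ y^κ dm ≤ C μ^κ`, and one at `θ = -β/2` gives `m [μ/2, ∞) ≥ 1 - e^{-α₀/12}`,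
hence `∫ y^κ dm ≥ c μ^κ`, with `c, C` depending only on `α₀` and `κ`. For `s ∈ (0,t]` and `z > 1`,
`μ = z e^{-bs} ∈ [z e^{-bt}, z]` and `α ≥ (2b/σ²) e^{-bt}`, so the inner integral is comparable to
`z^κ` uniformly in `s`.
-/

open Real Nat

lemma summable_pow_div_factorial_mul_factorial_succ (u : ℝ) :
    Summable fun k : ℕ => u ^ k / ((k ! : ℝ) * ((k + 1) ! : ℝ)) := by
  refine (Real.summable_pow_div_factorial |u|).of_norm_bounded fun k => ?_
  rw [norm_div, norm_pow, Real.norm_eq_abs, norm_of_nonneg (by positivity)]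
  gcongr
  exact le_mul_of_one_le_right (by positivity) (mod_cast (k + 1).factorial_pos)

lemma besselI1_two_mul_sqrt {u : ℝ} (hu : 0 ≤ u) :
    besselI1 (2 * √u) = √u * ∑' k : ℕ, u ^ k / ((k ! : ℝ) * ((k + 1) ! : ℝ)) := by
  rw [besselI1, mul_pow, sq_sqrt hu]
  ring_nf

/-- The weight of the `k`-th term of `m_{α,β}` as a mixture of Gamma densities `x ^ k e^{-βx}`:
Poisson weight `e^{-α} α^{k+1} / (k+1)!` times the Gamma normalisation `β^{k+1} / k!`. -/
noncomputable def besselCoeff (α β : ℝ) (k : ℕ) : ℝ :=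
  exp (-α) * (α * β) ^ (k + 1) / ((k ! : ℝ) * ((k + 1) ! : ℝ))

lemma besselCoeff_nonneg {α β : ℝ} (hα : 0 ≤ α) (hβ : 0 ≤ β) (k : ℕ) : 0 ≤ besselCoeff α β k := by
  unfold besselCoeff; positivity

lemma besselDensity_eq_tsum {α β x : ℝ} (hα : 0 < α) (hβ : 0 < β) (hx : 0 < x) :
    β * exp (-α - β * x) * √(α / (β * x)) * besselI1 (2 * √(α * β * x)) =
      ∑' k : ℕ, besselCoeff α β k * (x ^ k * exp (-(β * x))) := by
  have hsqrt : √(α / (β * x)) * √(α * β * x) = α := by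
    rw [← sqrt_mul (by positivity), show α / (β * x) * (α * β * x) = α ^ 2 by field_simp,
      sqrt_sq hα.le]
  calc β * exp (-α - β * x) * √(α / (β * x)) * besselI1 (2 * √(α * β * x))
      = β * exp (-α - β * x) * (√(α / (β * x)) * √(α * β * x)) *
          ∑' k : ℕ, (α * β * x) ^ k / ((k ! : ℝ) * ((k + 1) ! : ℝ)) := by
        rw [besselI1_two_mul_sqrt (by positivity)]; ring
    _ = _ := by
        rw [hsqrt, ← tsum_mul_left]
        congr 1; funext k
        rw [besselCoeff, sub_eq_add_neg, exp_add]
        field_simp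
        ring

lemma summable_besselCoeff_mul {α β : ℝ} (x : ℝ) :
    Summable fun k : ℕ => besselCoeff α β k * x ^ k := by
  refine ((summable_pow_div_factorial_mul_factorial_succ (α * β * x)).mul_left
    (exp (-α) * (α * β))).congr fun k => ?_
  rw [besselCoeff]
  ring

lemma lintegral_pow_mul_exp_neg_mul_Ioi {γ : ℝ} (hγ : 0 < γ) (k : ℕ) :
    ∫⁻ x in Ioi 0, ENNReal.ofReal (x ^ k * exp (-(γ * x))) =
      ENNReal.ofReal (k ! / γ ^ (k + 1)) := by
  have key := integral_rpow_mul_exp_neg_mul_Ioi (a := k + 1) (by positivity) hγ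
  simp only [add_sub_cancel_right, rpow_natCast] at key
  rw [← ofReal_integral_eq_lintegral_ofReal (.of_integral_ne_zero (by rw [key]; positivity))
    ((ae_restrict_mem measurableSet_Ioi).mono fun x (hx : 0 < x) => by positivity), key,
    Gamma_nat_eq_factorial, one_div, inv_rpow hγ.le, ← rpow_natCast]
  norm_cast
  ring_nf

lemma ofReal_besselDensity_eq {α β : ℝ} (hα : 0 < α) (hβ : 0 < β) :
    (fun x => ENNReal.ofReal (indicator (Ioi (0 : ℝ))
        (fun x => β * exp (-α - β * x) * √(α / (β * x)) * besselI1 (2 * √(α * β * x))) x)) =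
      (Ioi 0).indicator fun x =>
        ∑' k : ℕ, ENNReal.ofReal (besselCoeff α β k * (x ^ k * exp (-(β * x)))) := by
  funext x
  by_cases hx : x ∈ Ioi 0
  · rw [indicator_of_mem hx, indicator_of_mem hx, besselDensity_eq_tsum hα hβ hx,
      ENNReal.ofReal_tsum_of_nonneg]
    · exact fun k => mul_nonneg (besselCoeff_nonneg hα.le hβ.le k)
        (mul_nonneg (pow_nonneg (le_of_lt hx) k) (exp_nonneg _))
    · exact ((summable_besselCoeff_mul x).mul_right (exp (-(β * x)))).congr fun k => by ring
  · simp [indicator_of_notMem hx]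

lemma ofReal_mul_exp_eq_tsum {c u : ℝ} (hc : 0 ≤ c) (hu : 0 ≤ u) :
    ENNReal.ofReal (c * exp u) = ∑' n : ℕ, ENNReal.ofReal (c * (u ^ n / n !)) := by
  rw [← ENNReal.ofReal_tsum_of_nonneg (fun n => by positivity)
    ((Real.summable_pow_div_factorial u).mul_left c), tsum_mul_left, exp_eq_exp_ℝ,
    (NormedSpace.expSeries_div_hasSum_exp u).tsum_eq]

theorem lintegral_exp_mul_besselMeasure {α β θ : ℝ} (hα : 0 < α) (hβ : 0 < β) (hθ : θ < β) :
    ∫⁻ y, ENNReal.ofReal (exp (θ * y)) ∂besselMeasure α β =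
      ENNReal.ofReal (exp (α * θ / (β - θ))) := by
  have hγ : 0 < β - θ := sub_pos.mpr hθ
  have hterm : ∀ k : ℕ,
      ∫⁻ x in Ioi 0, ENNReal.ofReal (besselCoeff α β k * (x ^ k * exp (-(β * x)))) *
        ENNReal.ofReal (exp (θ * x)) =
      ENNReal.ofReal (exp (-α) * ((α * β / (β - θ)) ^ (k + 1) / (k + 1) !)) := by
    intro k
    have hc := besselCoeff_nonneg hα.le hβ.le k
    calc _ = ∫⁻ x in Ioi 0, ENNReal.ofReal (besselCoeff α β k) *
            ENNReal.ofReal (x ^ k * exp (-((β - θ) * x))) := by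
          refine setLIntegral_congr_fun measurableSet_Ioi fun x (hx : 0 < x) => ?_
          rw [← ENNReal.ofReal_mul (by positivity), ← ENNReal.ofReal_mul hc, mul_assoc,
            mul_assoc, ← exp_add]
          ring_nf
      _ = ENNReal.ofReal (besselCoeff α β k) * ENNReal.ofReal (k ! / (β - θ) ^ (k + 1)) := by
          rw [lintegral_const_mul _ (by fun_prop), lintegral_pow_mul_exp_neg_mul_Ioi hγ]
      _ = _ := by
          rw [← ENNReal.ofReal_mul hc, besselCoeff]
          congr 1
          rw [div_pow]
          field_simp
  have hdens : Measurable ((Ioi (0 : ℝ)).indicator fun x =>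
      ∑' k : ℕ, ENNReal.ofReal (besselCoeff α β k * (x ^ k * exp (-(β * x))))) :=
    (Measurable.tsum fun k => by fun_prop).indicator measurableSet_Ioi
  rw [besselMeasure, lintegral_add_measure, lintegral_smul_measure, lintegral_dirac,
    ofReal_besselDensity_eq hα hβ, lintegral_withDensity_eq_lintegral_mul _ hdens (by fun_prop)]
  simp only [Pi.mul_apply,
    ← indicator_mul_left (Ioi (0 : ℝ)) _ fun x => ENNReal.ofReal (exp (θ * x))]
  rw [lintegral_indicator measurableSet_Ioi]
  simp only [← ENNReal.tsum_mul_right]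
  rw [lintegral_tsum fun k => by fun_prop]
  simp only [hterm, mul_zero, exp_zero, smul_eq_mul, ← ENNReal.ofReal_mul (exp_pos _).le]
  have hexponent : α * θ / (β - θ) = -α + α * β / (β - θ) := by field_simp; ring
  rw [hexponent, exp_add, ofReal_mul_exp_eq_tsum (exp_pos (-α)).le (by positivity)]
  conv_rhs => rw [tsum_eq_zero_add' ENNReal.summable]
  simp

lemma ae_nonneg_besselMeasure (α β : ℝ) : ∀ᵐ y ∂besselMeasure α β, 0 ≤ y := by
  simp only [ae_iff, not_le]
  change besselMeasure α β (Iio 0) = 0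
  rw [besselMeasure, Measure.add_apply, Measure.smul_apply,
    Measure.dirac_apply' _ measurableSet_Iio, withDensity_apply _ measurableSet_Iio,
    setLIntegral_congr_fun measurableSet_Iio (g := 0) fun x (hx : x < 0) => by
      rw [indicator_of_notMem (show x ∉ Ioi (0 : ℝ) from not_lt.mpr hx.le),
        ENNReal.ofReal_zero, Pi.zero_apply]]
  simp

lemma isProbabilityMeasure_besselMeasure {α β : ℝ} (hα : 0 < α) (hβ : 0 < β) :
    IsProbabilityMeasure (besselMeasure α β) :=
  ⟨by simpa using lintegral_exp_mul_besselMeasure hα hβ (θ := 0) hβ⟩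

lemma rpow_le_div_rpow_mul_exp {y κ θ : ℝ} (hy : 0 ≤ y) (hκ : 0 < κ) (hθ : 0 < θ) :
    y ^ κ ≤ (κ / θ) ^ κ * exp (θ * y) := by
  have hu : θ * y / κ ≤ exp (θ * y / κ) :=
    (le_add_of_nonneg_right zero_le_one).trans (add_one_le_exp _)
  calc y ^ κ = (κ / θ) ^ κ * (θ * y / κ) ^ κ := by
        rw [← mul_rpow (by positivity) (by positivity)]
        field_simp
    _ ≤ (κ / θ) ^ κ * exp (θ * y / κ) ^ κ := by gcongr
    _ = (κ / θ) ^ κ * exp (θ * y) := by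
        rw [← exp_mul]
        field_simp

theorem lintegral_rpow_besselMeasure_le {α₀ α β κ : ℝ} (hα₀ : 0 < α₀) (hα : α₀ ≤ α) (hβ : 0 < β)
    (hκ : 0 < κ) :
    ∫⁻ y, ENNReal.ofReal (y ^ κ) ∂besselMeasure α β ≤
      ENNReal.ofReal ((2 * κ / α₀) ^ κ * exp α₀ * (α / β) ^ κ) := by
  have hαpos : 0 < α := hα₀.trans_le hα
  -- `θ = α₀ / (2 × mean)`: large enough for `(κ/θ)^κ` to be of order `mean^κ`, small enough for
  -- the exponential moment to stay below `e^{α₀}`.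
  set θ := α₀ * β / (2 * α) with hθ_def
  have hθ : 0 < θ := by positivity
  have hθβ : θ ≤ β / 2 := by
    rw [hθ_def, div_le_div_iff₀ (by positivity) two_pos]
    nlinarith
  calc ∫⁻ y, ENNReal.ofReal (y ^ κ) ∂besselMeasure α β
      ≤ ∫⁻ y, ENNReal.ofReal ((κ / θ) ^ κ) * ENNReal.ofReal (exp (θ * y)) ∂besselMeasure α β := by
        refine lintegral_mono_ae ((ae_nonneg_besselMeasure α β).mono fun y hy => ?_)
        rw [← ENNReal.ofReal_mul (by positivity)]
        exact ENNReal.ofReal_le_ofReal (rpow_le_div_rpow_mul_exp hy hκ hθ)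
    _ = ENNReal.ofReal ((κ / θ) ^ κ * exp (α * θ / (β - θ))) := by
        rw [lintegral_const_mul _ (by fun_prop),
          lintegral_exp_mul_besselMeasure hαpos hβ (by linarith),
          ← ENNReal.ofReal_mul (by positivity)]
    _ ≤ ENNReal.ofReal ((2 * κ / α₀) ^ κ * exp α₀ * (α / β) ^ κ) := by
        refine ENNReal.ofReal_le_ofReal ?_
        have hκθ : κ / θ = 2 * κ / α₀ * (α / β) := by rw [hθ_def]; field_simp
        have hexp : α * θ / (β - θ) ≤ α₀ := by
          rw [div_le_iff₀ (by linarith), hθ_def]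
          field_simp
          nlinarith
        rw [hκθ, mul_rpow (by positivity) (by positivity), mul_right_comm]
        gcongr

lemma besselMeasure_Iio_half_mean_le {α β : ℝ} (hα : 0 < α) (hβ : 0 < β) :
    besselMeasure α β (Iio (α / (2 * β))) ≤ ENNReal.ofReal (exp (-(α / 12))) := by
  calc besselMeasure α β (Iio (α / (2 * β)))
      = ∫⁻ y, (Iio (α / (2 * β))).indicator 1 y ∂besselMeasure α β :=
        (lintegral_indicator_one measurableSet_Iio).symm
    _ ≤ ∫⁻ y, ENNReal.ofReal (exp (α / 4)) * ENNReal.ofReal (exp (-(β / 2) * y))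
          ∂besselMeasure α β := by
        refine lintegral_mono (indicator_le fun y (hy : y < α / (2 * β)) => ?_)
        rw [Pi.one_apply, ← ENNReal.ofReal_mul (exp_pos _).le, ← exp_add, ENNReal.one_le_ofReal,
          one_le_exp_iff]
        rw [lt_div_iff₀ (by positivity)] at hy
        nlinarith
    _ = ENNReal.ofReal (exp (-(α / 12))) := by
        rw [lintegral_const_mul _ (by fun_prop),
          lintegral_exp_mul_besselMeasure hα hβ (by linarith), ← ENNReal.ofReal_mul (exp_pos _).le,
          ← exp_add]
        congr 2
        field_simp
        ring

theorem le_lintegral_rpow_besselMeasure {α₀ α β κ : ℝ} (hα₀ : 0 < α₀) (hα : α₀ ≤ α) (hβ : 0 < β)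
    (hκ : 0 ≤ κ) :
    ENNReal.ofReal ((1 - exp (-(α₀ / 12))) * (α / (2 * β)) ^ κ) ≤
      ∫⁻ y, ENNReal.ofReal (y ^ κ) ∂besselMeasure α β := by
  have hαpos : 0 < α := hα₀.trans_le hα
  have := isProbabilityMeasure_besselMeasure hαpos hβ
  set a := α / (2 * β)
  calc ENNReal.ofReal ((1 - exp (-(α₀ / 12))) * a ^ κ)
      ≤ ENNReal.ofReal (a ^ κ) * besselMeasure α β (Ici a) := by
        rw [mul_comm, ENNReal.ofReal_mul (by positivity), ← compl_Iio,
          prob_compl_eq_one_sub measurableSet_Iio]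
        gcongr
        calc ENNReal.ofReal (1 - exp (-(α₀ / 12)))
            = 1 - ENNReal.ofReal (exp (-(α₀ / 12))) := by
              rw [ENNReal.ofReal_sub _ (exp_pos _).le, ENNReal.ofReal_one]
          _ ≤ 1 - besselMeasure α β (Iio a) := by
              gcongr
              exact (besselMeasure_Iio_half_mean_le hαpos hβ).trans
                (ENNReal.ofReal_le_ofReal (exp_le_exp.mpr (by linarith)))
    _ = ∫⁻ y, (Ici a).indicator (fun _ => ENNReal.ofReal (a ^ κ)) y ∂besselMeasure α β :=
        (lintegral_indicator_const measurableSet_Ici _).symm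
    _ ≤ ∫⁻ y, ENNReal.ofReal (y ^ κ) ∂besselMeasure α β :=
        lintegral_mono (indicator_le fun y (hy : a ≤ y) =>
          ENNReal.ofReal_le_ofReal (rpow_le_rpow (by positivity) hy hκ))

theorem setLIntegral_setLIntegral_lt_top_iff_of_le_of_le {X Y : Type*} [MeasurableSpace X]
    [MeasurableSpace Y] {μ : Measure X} {ν : Measure Y} {s : Set X} {u : Set Y}
    {F : X → Y → ℝ≥0∞} {f : Y → ℝ≥0∞} {c C : ℝ≥0∞} (hs : MeasurableSet s) (hu : MeasurableSet u)
    (hμs₀ : μ s ≠ 0) (hμs : μ s ≠ ∞) (hc : c ≠ 0) (hC : C ≠ ∞)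
    (hlow : ∀ x ∈ s, ∀ y ∈ u, c * f y ≤ F x y) (hup : ∀ x ∈ s, ∀ y ∈ u, F x y ≤ C * f y) :
    (∫⁻ x in s, ∫⁻ y in u, F x y ∂ν ∂μ < ∞) ↔ ∫⁻ y in u, f y ∂ν < ∞ := by
  set I := ∫⁻ y in u, f y ∂ν
  have hlower : c * I * μ s ≤ ∫⁻ x in s, ∫⁻ y in u, F x y ∂ν ∂μ := by
    rw [← setLIntegral_const]
    exact setLIntegral_mono' hs fun x hx =>
      (lintegral_const_mul_le c f).trans (setLIntegral_mono' hu (hlow x hx))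
  have hupper : ∫⁻ x in s, ∫⁻ y in u, F x y ∂ν ∂μ ≤ C * I * μ s := by
    rw [← setLIntegral_const, ← lintegral_const_mul' C f hC]
    exact setLIntegral_mono' hs fun x hx => setLIntegral_mono' hu (hup x hx)
  refine ⟨fun h => lt_top_iff_ne_top.mpr fun hI => ?_, fun h =>
    hupper.trans_lt (ENNReal.mul_lt_top (ENNReal.mul_lt_top hC.lt_top h) hμs.lt_top)⟩
  rw [hI, ENNReal.mul_top hc, ENNReal.top_mul hμs₀, top_le_iff] at hlower
  exact h.ne hlower

noncomputable def alphaParam (b σ z s : ℝ) : ℝ := 2 * b * z / (σ ^ 2 * (exp (b * s) - 1))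

noncomputable def betaParam (b σ s : ℝ) : ℝ := 2 * b * exp (b * s) / (σ ^ 2 * (exp (b * s) - 1))

section Params

variable {b σ s : ℝ} (hb : 0 < b) (hσ : σ ≠ 0) (hs : 0 < s)
include hb hσ hs

lemma betaParam_pos : 0 < betaParam b σ s := by
  have : 0 < exp (b * s) - 1 := sub_pos.mpr (one_lt_exp_iff.mpr (by positivity))
  unfold betaParam
  positivity

lemma alphaParam_div_betaParam (z : ℝ) :
    alphaParam b σ z s / betaParam b σ s = z * exp (-(b * s)) := by
  have : exp (b * s) - 1 ≠ 0 := (sub_pos.mpr (one_lt_exp_iff.mpr (by positivity))).ne'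
  rw [alphaParam, betaParam, exp_neg]
  field_simp

lemma le_alphaParam {t z : ℝ} (hst : s ≤ t) (hz : 1 ≤ z) :
    2 * b / σ ^ 2 * exp (-(b * t)) ≤ alphaParam b σ z s := by
  have : 0 < exp (b * s) - 1 := sub_pos.mpr (one_lt_exp_iff.mpr (by positivity))
  calc 2 * b / σ ^ 2 * exp (-(b * t)) ≤ 2 * b / σ ^ 2 * exp (-(b * s)) := by gcongr
    _ = 2 * b / (σ ^ 2 * exp (b * s)) := by rw [exp_neg]; field_simp
    _ ≤ 2 * b / (σ ^ 2 * (exp (b * s) - 1)) := by gcongr; linarith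
    _ ≤ alphaParam b σ z s :=
        div_le_div_of_nonneg_right (le_mul_of_one_le_right (by positivity) hz) (by positivity)

end Params

theorem bessel_double_integral_finite_iff_general (b σ κ t : ℝ) (hb : 0 < b) (hσ : 0 < σ)
    (hκ : 0 < κ) (ht : 0 < t)
    (ν : Measure ℝ) :
    (∫⁻ s in Set.Ioc (0 : ℝ) t,
        ∫⁻ z in Set.Ioi (1 : ℝ),
          (∫⁻ y, ENNReal.ofReal (y ^ κ)
            ∂ besselMeasure (2 * b * z / (σ ^ 2 * (Real.exp (b * s) - 1)))
                (2 * b * Real.exp (b * s) / (σ ^ 2 * (Real.exp (b * s) - 1)))) ∂ν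
      < ⊤) ↔
      ∫⁻ z in Set.Ioi (1 : ℝ), ENNReal.ofReal (z ^ κ) ∂ν < ⊤ := by
  set α₀ := 2 * b / σ ^ 2 * exp (-(b * t))
  have hα₀ : 0 < α₀ := by positivity
  have hσ₀ : σ ≠ 0 := hσ.ne'
  have hc : 0 < 1 - exp (-(α₀ / 12)) := sub_pos.mpr (exp_lt_one_iff.mpr (by linarith))
  refine setLIntegral_setLIntegral_lt_top_iff_of_le_of_le (F := fun s z =>
      ∫⁻ y, ENNReal.ofReal (y ^ κ) ∂besselMeasure (alphaParam b σ z s) (betaParam b σ s))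
    (c := ENNReal.ofReal ((1 - exp (-(α₀ / 12))) * (exp (-(b * t)) / 2) ^ κ))
    (C := ENNReal.ofReal ((2 * κ / α₀) ^ κ * exp α₀)) measurableSet_Ioc measurableSet_Ioi
    (by simp [ht]) (by simp) (ENNReal.ofReal_pos.mpr (by positivity)).ne' ENNReal.ofReal_ne_top
    ?_ ?_
  · rintro s ⟨hs, hst⟩ z (hz : 1 < z)
    refine le_trans ?_ (le_lintegral_rpow_besselMeasure hα₀ (le_alphaParam hb hσ₀ hs hst hz.le)
      (betaParam_pos hb hσ₀ hs) hκ.le)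
    rw [← ENNReal.ofReal_mul (by positivity), mul_assoc, ← mul_rpow (by positivity) (by positivity),
      div_mul_eq_div_div_swap, alphaParam_div_betaParam hb hσ₀ hs]
    refine ENNReal.ofReal_le_ofReal (mul_le_mul_of_nonneg_left
      (rpow_le_rpow (by positivity) ?_ hκ.le) hc.le)
    have : exp (-(b * t)) ≤ exp (-(b * s)) := exp_le_exp.mpr (by nlinarith)
    nlinarith
  · rintro s ⟨hs, hst⟩ z (hz : 1 < z)
    refine (lintegral_rpow_besselMeasure_le hα₀ (le_alphaParam hb hσ₀ hs hst hz.le)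
      (betaParam_pos hb hσ₀ hs) hκ).trans ?_
    rw [← ENNReal.ofReal_mul (by positivity), alphaParam_div_betaParam hb hσ₀ hs]
    gcongr
    exact mul_le_of_le_one_right (by linarith) (exp_le_one_iff.mpr (by nlinarith))

theorem bessel_double_integral_finite_iff (b σ κ t : ℝ) (hb : 0 < b) (hσ : 0 < σ)
    (hκ : 0 < κ) (ht : 0 < t)
    (ν : Measure ℝ) (hνsupp : ν (Set.Iic 0) = 0)
    (hν : ∫⁻ z in Set.Ioi (0 : ℝ), ENNReal.ofReal (min z 1) ∂ν < ⊤) :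
    (∫⁻ s in Set.Ioc (0 : ℝ) t,
        ∫⁻ z in Set.Ioi (1 : ℝ),
          (∫⁻ y, ENNReal.ofReal (y ^ κ)
            ∂ besselMeasure (2 * b * z / (σ ^ 2 * (Real.exp (b * s) - 1)))
                (2 * b * Real.exp (b * s) / (σ ^ 2 * (Real.exp (b * s) - 1)))) ∂ν
      < ⊤) ↔
      ∫⁻ z in Set.Ioi (1 : ℝ), ENNReal.ofReal (z ^ κ) ∂ν < ⊤ :=
  bessel_double_integral_finite_iff_general b σ κ t hb hσ hκ ht ν
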